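/- arXiv:1309.0580 — 3 statements merged into one kernel-verified Lean document; each statement's English description precedes it below -/
import Mathlib

section
/- For all n ≥ 1, the sum over pairs (a,b) of non-negative integers with a+b=n of (2a-1)·(B_{2a}/(2a)!)·(B_{2b}/(2b)!)·h_{a,b}(x,y) equals 0 in the polynomial ring ℚ[x,y], where B_k denotes the k-th Bernoulli number and h_{a,b}(x,y) = x^{2a-1}y^{2b} - x^{2b}y^{2a-1} + xy(x+y)^{2b-1}(y^{2a-2} - x^{2a-2}). -/
/-!
Let `G(t) = (t/2) coth (t/2) = ∑ B_{2a} t^{2a} / (2a)!` and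
`C(t) = t G'(t) - G(t) = ∑ (2a-1) B_{2a} t^{2a} / (2a)!`, so that the weights of the sum are the
coefficients of `C(ut) G(vt)`. Both series are rational in `eᵗ`: `2 G (eᵗ - 1) = t (eᵗ + 1)` and
`C (eᵗ - 1)² = -t² eᵗ`. Hence the addition law `e^{(x+y)t} = e^{xt} e^{yt}` yields the identity
`(x+y) x y² C(xt) G(yt) - (x+y) x² y C(yt) G(xt) + x³ y C(yt) G((x+y)t) - x y³ C(xt) G((x+y)t) = 0`
of power series, whose coefficient of `t^{2n}` is `x² y² (x+y)` times the sum in the theorem.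
-/

open scoped BigOperators

noncomputable section

namespace Stmt0

/-- The fraction field of `ℚ[x,y]`, in which the (possibly negative) exponents occurring in
`h_{a,b}` make sense. -/
abbrev K := FractionRing (MvPolynomial (Fin 2) ℚ)

noncomputable def x : K := algebraMap (MvPolynomial (Fin 2) ℚ) K (MvPolynomial.X 0)

noncomputable def y : K := algebraMap (MvPolynomial (Fin 2) ℚ) K (MvPolynomial.X 1)

/-- `h_{a,b}(x,y) = x^{2a-1} y^{2b} - x^{2b} y^{2a-1} + x y (x+y)^{2b-1} (y^{2a-2} - x^{2a-2})`,
with the negative exponents arising for `a = 0` or `b = 0` interpreted in the fraction field. -/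
noncomputable def h (a b : ℕ) : K :=
  x ^ (2 * a) * y ^ (2 * b) / x - x ^ (2 * b) * y ^ (2 * a) / y
    + x * y * ((x + y) ^ (2 * b) / (x + y)) * (y ^ (2 * a) / y ^ 2 - x ^ (2 * a) / x ^ 2)

open Finset PowerSeries

theorem powerSeries_two_ne_zero {A : Type*} [CommRing A] [Algebra ℚ A] [Nontrivial A] :
    (2 : A⟦X⟧) ≠ 0 := by
  simpa only [map_ofNat, map_zero] using (algebraMap ℚ A⟦X⟧).injective.ne (two_ne_zero (α := ℚ))

theorem sum_antidiagonal_two_mul {M : Type*} [AddCommMonoid M] (n : ℕ)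
    (f : ℕ → ℕ → M) (hf : ∀ k l, Odd k → f k l = 0) :
    ∑ p ∈ antidiagonal (2 * n), f p.1 p.2 = ∑ p ∈ antidiagonal n, f (2 * p.1) (2 * p.2) := by
  have hinj : Set.InjOn (fun p : ℕ × ℕ ↦ (2 * p.1, 2 * p.2)) (antidiagonal n) := by
    intro p _ q _ h
    simp only [Prod.mk.injEq] at h
    ext <;> omega
  rw [← sum_image (f := fun q ↦ f q.1 q.2) hinj]
  refine (sum_subset (fun q hq ↦ ?_) fun q hq hq' ↦ ?_).symm
  · simp only [mem_image, HasAntidiagonal.mem_antidiagonal] at hq ⊢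
    obtain ⟨p, hp, rfl⟩ := hq
    omega
  · refine hf _ _ (Nat.not_even_iff_odd.mp fun ⟨a, ha⟩ ↦ hq' ?_)
    simp only [mem_image, HasAntidiagonal.mem_antidiagonal] at hq ⊢
    exact ⟨(a, n - a), by omega, Prod.ext (by omega) (by omega)⟩

/-- `t / (eᵗ - 1) + t / 2 = (t/2) coth (t/2)`. -/
def cothSeries : ℚ⟦X⟧ := bernoulliPowerSeries ℚ + C (1 / 2) * X

def cothSeriesEuler : ℚ⟦X⟧ := X * d⁄dX ℚ cothSeries - cothSeries

theorem two_mul_cothSeries_mul_exp_sub_one :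
    2 * cothSeries * (exp ℚ - 1) = X * (exp ℚ + 1) := by
  have h2 : (2 : ℚ⟦X⟧) * C (1 / 2) = 1 := by rw [← map_ofNat C 2, ← map_mul]; norm_num
  unfold cothSeries
  linear_combination 2 * bernoulliPowerSeries_mul_exp_sub_one ℚ + X * (exp ℚ - 1) * h2

theorem two_mul_exp_sub_one_mul_derivative_cothSeries :
    2 * (exp ℚ - 1) * d⁄dX ℚ cothSeries = exp ℚ + 1 + X * exp ℚ - 2 * cothSeries * exp ℚ := by
  have h := congrArg (d⁄dX ℚ) two_mul_cothSeries_mul_exp_sub_one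
  rw [← Nat.cast_ofNat] at h
  simp only [Derivation.leibniz, map_sub, map_add, Derivation.map_one_eq_zero,
    Derivation.map_natCast, derivative_X, derivative_exp, smul_eq_mul] at h
  linear_combination h

theorem cothSeriesEuler_mul_exp_sub_one_sq :
    cothSeriesEuler * (exp ℚ - 1) ^ 2 = -(X ^ 2 * exp ℚ) := by
  refine mul_left_cancel₀ powerSeries_two_ne_zero ?_
  unfold cothSeriesEuler
  linear_combination (X * (exp ℚ - 1)) * two_mul_exp_sub_one_mul_derivative_cothSeries
    - (X * exp ℚ + (exp ℚ - 1)) * two_mul_cothSeries_mul_exp_sub_one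

theorem coeff_cothSeries {n : ℕ} (hn : n ≠ 1) :
    coeff n cothSeries = bernoulli n / n.factorial := by
  simp [cothSeries, bernoulliPowerSeries, coeff_X, hn]

theorem coeff_cothSeries_of_odd {n : ℕ} (hn : Odd n) : coeff n cothSeries = 0 := by
  obtain rfl | h1 := eq_or_ne n 1
  · norm_num [cothSeries, bernoulliPowerSeries, bernoulli_one]
  · rw [coeff_cothSeries h1, bernoulli_eq_zero_of_odd hn (by grind), zero_div]

theorem coeff_cothSeriesEuler (n : ℕ) :
    coeff n cothSeriesEuler = ((n : ℚ) - 1) * coeff n cothSeries := by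
  cases n with
  | zero => simp [cothSeriesEuler]
  | succ m =>
    rw [cothSeriesEuler, map_sub, coeff_succ_X_mul, coeff_derivative]
    push_cast
    ring

theorem coeff_cothSeriesEuler_of_odd {n : ℕ} (hn : Odd n) : coeff n cothSeriesEuler = 0 := by
  rw [coeff_cothSeriesEuler, coeff_cothSeries_of_odd hn, mul_zero]

theorem coeff_two_mul_cothSeriesEuler (a : ℕ) :
    coeff (2 * a) cothSeriesEuler
      = (2 * (a : ℚ) - 1) * (bernoulli (2 * a) / (2 * a).factorial) := by
  rw [coeff_cothSeriesEuler, coeff_cothSeries (by omega)]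
  push_cast
  ring

/-- With `a = eᵘ`, `gu = (u/2) coth (u/2)` and `cu = -u² / (4 sinh² (u/2))`, this is an
algebraic consequence of `e^{u+v} = eᵘ eᵛ`. -/
theorem coth_relations_combination {R : Type*} [CommRing R] [IsDomain R]
    {u v a b gu gv guv cu cv : R} (h2 : (2 : R) ≠ 0) (ha : a ≠ 1) (hb : b ≠ 1) (hab : a * b ≠ 1)
    (hgu : 2 * gu * (a - 1) = u * (a + 1)) (hgv : 2 * gv * (b - 1) = v * (b + 1))
    (hguv : 2 * guv * (a * b - 1) = (u + v) * (a * b + 1))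
    (hcu : cu * (a - 1) ^ 2 = -(u ^ 2 * a)) (hcv : cv * (b - 1) ^ 2 = -(v ^ 2 * b)) :
    (u + v) * u * v ^ 2 * (cu * gv) - (u + v) * u ^ 2 * v * (cv * gu)
      + u ^ 3 * v * (cv * guv) - u * v ^ 3 * (cu * guv) = 0 := by
  have hD : 2 * ((a - 1) * (b - 1) * (a * b - 1)) ^ 2 ≠ 0 := by
    refine mul_ne_zero h2 (pow_ne_zero _ (mul_ne_zero (mul_ne_zero ?_ ?_) ?_)) <;>
      exact sub_ne_zero.mpr ‹_›
  refine (mul_eq_zero.mp ?_).resolve_right hD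
  linear_combination
      (2 * (u + v) * u * v ^ 2 * gv - 2 * u * v ^ 3 * guv) * (b - 1) ^ 2 * (a * b - 1) ^ 2 * hcu
      - (u + v) * u ^ 3 * v ^ 2 * a * (b - 1) * (a * b - 1) ^ 2 * hgv
      + (2 * u ^ 3 * v * guv - 2 * (u + v) * u ^ 2 * v * gu) * (a - 1) ^ 2 * (a * b - 1) ^ 2 * hcv
      + (u + v) * u ^ 2 * v ^ 3 * b * (a - 1) * (a * b - 1) ^ 2 * hgu
      + u ^ 3 * v ^ 3 * (a * (b - 1) ^ 2 - b * (a - 1) ^ 2) * (a * b - 1) * hguv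

section Rescale

variable {A : Type*} [CommRing A] [Algebra ℚ A]

def rescaleMap (u : A) : ℚ⟦X⟧ →+* A⟦X⟧ := (rescale u).comp (map (algebraMap ℚ A))

theorem rescaleMap_X (u : A) : rescaleMap u X = C u * X := by
  simp [rescaleMap, rescale_X]

theorem rescaleMap_exp (u : A) : rescaleMap u (exp ℚ) = rescale u (exp A) := by
  simp [rescaleMap, map_exp]

theorem coeff_rescaleMap (u : A) (f : ℚ⟦X⟧) (n : ℕ) :
    coeff n (rescaleMap u f) = u ^ n * algebraMap ℚ A (coeff n f) := by
  simp [rescaleMap, coeff_rescale]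

theorem rescale_exp_ne_one {u : A} (hu : u ≠ 0) : rescale u (exp A) ≠ 1 := fun h ↦
  hu <| by simpa [coeff_rescale, coeff_one] using congrArg (coeff 1) h

theorem rescaleMap_coth_identity [IsDomain A] {u v : A} (hu : u ≠ 0) (hv : v ≠ 0)
    (huv : u + v ≠ 0) :
    C ((u + v) * u * v ^ 2) * (rescaleMap u cothSeriesEuler * rescaleMap v cothSeries)
      - C ((u + v) * u ^ 2 * v) * (rescaleMap v cothSeriesEuler * rescaleMap u cothSeries)
      + C (u ^ 3 * v) * (rescaleMap v cothSeriesEuler * rescaleMap (u + v) cothSeries)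
      - C (u * v ^ 3) * (rescaleMap u cothSeriesEuler * rescaleMap (u + v) cothSeries) = 0 := by
  have hG (w : A) := congrArg (rescaleMap w) two_mul_cothSeries_mul_exp_sub_one
  have hC (w : A) := congrArg (rescaleMap w) cothSeriesEuler_mul_exp_sub_one_sq
  simp only [map_mul, map_sub, map_add, map_pow, map_neg, map_one, map_ofNat, rescaleMap_X,
    rescaleMap_exp] at hG hC
  have hGuv := hG (u + v)
  rw [← exp_mul_exp_eq_exp_add, map_add, add_mul] at hGuv
  have hcomb := coth_relations_combination powerSeries_two_ne_zero (rescale_exp_ne_one hu)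
    (rescale_exp_ne_one hv) (by rw [exp_mul_exp_eq_exp_add]; exact rescale_exp_ne_one huv)
    (hG u) (hG v) hGuv (hC u) (hC v)
  refine mul_left_cancel₀ (pow_ne_zero 4 X_ne_zero) ?_
  simp only [map_add, map_mul, map_pow, mul_zero]
  linear_combination hcomb

theorem coeff_two_mul_rescaleMap_mul {f : ℚ⟦X⟧} (hf : ∀ k, Odd k → coeff k f = 0) (g : ℚ⟦X⟧)
    (u v : A) (n : ℕ) :
    coeff (2 * n) (rescaleMap u f * rescaleMap v g) = ∑ p ∈ antidiagonal n,
      algebraMap ℚ A (coeff (2 * p.1) f * coeff (2 * p.2) g) * (u ^ (2 * p.1) * v ^ (2 * p.2)) := by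
  rw [coeff_mul, sum_antidiagonal_two_mul n
    (fun k l ↦ coeff k (rescaleMap u f) * coeff l (rescaleMap v g))
    fun k l hk ↦ by rw [coeff_rescaleMap, hf k hk, map_zero, mul_zero, zero_mul]]
  refine sum_congr rfl fun p _ ↦ ?_
  simp only [coeff_rescaleMap, map_mul]
  ring

theorem sum_bernoulli_mul_eq_zero [IsDomain A] {u v : A} (hu : u ≠ 0) (hv : v ≠ 0)
    (huv : u + v ≠ 0) (n : ℕ) :
    ∑ p ∈ antidiagonal n, algebraMap ℚ A ((2 * (p.1 : ℚ) - 1) *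
        (bernoulli (2 * p.1) / (2 * p.1).factorial) * (bernoulli (2 * p.2) / (2 * p.2).factorial)) *
      ((u + v) * u * v ^ 2 * (u ^ (2 * p.1) * v ^ (2 * p.2))
        - (u + v) * u ^ 2 * v * (v ^ (2 * p.1) * u ^ (2 * p.2))
        + u ^ 3 * v * (v ^ (2 * p.1) * (u + v) ^ (2 * p.2))
        - u * v ^ 3 * (u ^ (2 * p.1) * (u + v) ^ (2 * p.2))) = 0 := by
  have h := congrArg (coeff (2 * n)) (rescaleMap_coth_identity hu hv huv)
  simp only [map_sub, map_add, coeff_C_mul, map_zero,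
    coeff_two_mul_rescaleMap_mul (fun _ ↦ coeff_cothSeriesEuler_of_odd), mul_sum,
    ← sum_sub_distrib, ← sum_add_distrib] at h
  rw [← h]
  refine sum_congr rfl fun p _ ↦ ?_
  rw [coeff_two_mul_cothSeriesEuler, coeff_cothSeries (by omega), map_mul]
  ring

end Rescale

theorem x_ne_zero : x ≠ 0 :=
  (map_ne_zero_iff _ (IsFractionRing.injective _ K)).mpr (MvPolynomial.X_ne_zero 0)

theorem y_ne_zero : y ≠ 0 :=
  (map_ne_zero_iff _ (IsFractionRing.injective _ K)).mpr (MvPolynomial.X_ne_zero 1)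

theorem x_add_y_ne_zero : x + y ≠ 0 := by
  rw [x, y, ← map_add]
  refine (map_ne_zero_iff _ (IsFractionRing.injective _ K)).mpr fun h ↦ ?_
  simpa using congrArg (MvPolynomial.eval 1) h

theorem mul_h_eq (a b : ℕ) :
    x ^ 2 * y ^ 2 * (x + y) * h a b
      = (x + y) * x * y ^ 2 * (x ^ (2 * a) * y ^ (2 * b))
        - (x + y) * x ^ 2 * y * (y ^ (2 * a) * x ^ (2 * b))
        + x ^ 3 * y * (y ^ (2 * a) * (x + y) ^ (2 * b))
        - x * y ^ 3 * (x ^ (2 * a) * (x + y) ^ (2 * b)) := by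
  have := x_ne_zero
  have := y_ne_zero
  have := x_add_y_ne_zero
  rw [h]
  field_simp
  ring

theorem bernoulli_h_identity_general (n : ℕ) :
    ∑ p ∈ Finset.HasAntidiagonal.antidiagonal n,
      ((((2 * (p.1 : ℚ) - 1) * (bernoulli (2 * p.1) / (2 * p.1).factorial) *
        (bernoulli (2 * p.2) / (2 * p.2).factorial)) : ℚ) : K) * h p.1 p.2 = 0 := by
  have hxy : x ^ 2 * y ^ 2 * (x + y) ≠ 0 :=
    mul_ne_zero (mul_ne_zero (pow_ne_zero 2 x_ne_zero) (pow_ne_zero 2 y_ne_zero)) x_add_y_ne_zero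
  refine (mul_eq_zero.mp ?_).resolve_left hxy
  rw [mul_sum, ← sum_bernoulli_mul_eq_zero x_ne_zero y_ne_zero x_add_y_ne_zero n]
  refine sum_congr rfl fun p _ ↦ ?_
  rw [mul_left_comm, mul_h_eq, eq_ratCast]

/-- For all `n ≥ 1`,
`∑_{a+b=n, a,b ≥ 0} (2a-1) (B_{2a}/(2a)!) (B_{2b}/(2b)!) h_{a,b}(x,y) = 0`. -/
theorem bernoulli_h_identity (n : ℕ) (hn : 1 ≤ n) :
    ∑ p ∈ Finset.HasAntidiagonal.antidiagonal n,
      ((((2 * (p.1 : ℚ) - 1) * (bernoulli (2 * p.1) / (2 * p.1).factorial) *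
        (bernoulli (2 * p.2) / (2 * p.2).factorial)) : ℚ) : K) * h p.1 p.2 = 0 :=
  bernoulli_h_identity_general n

end Stmt0
end
end

section
/- In the completed universal enveloping algebra ℂ⟨⟨T,A⟩⟩ of the free Lie algebra on T and A, the conjugation identity e^T · R₀ · e^{-T} = -R_∞ holds, where R₀ = (ad_T/(e^{ad_T}-1))(A) and R_∞ = (ad_T/(e^{-ad_T}-1))(A). Consequently e^T e^{λR₀} e^{-T} e^{λR_∞} = 1 for every scalar λ. -/
/-!
Conjugation by `e^T` is `e^{ad_T}`: `e^T x e^{-T} = e^{ad_T} x`, since `ad_T` is the difference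
of the commuting operators of left and right multiplication by `T`. In `ℚ⟦x⟧`,
`e^x · x/(e^x - 1) = x/(1 - e^{-x}) = (-x)/(e^{-x} - 1)`. Since long words in `T, A` vanish,
`ad_T^n A = 0` for large `n`, so truncations of these series can be evaluated at `ad_T` and
applied to `A` multiplicatively; this gives `e^T R₀ e^{-T} = -R_∞`. Conjugating an exponential exponentiates the conjugate, so
`e^T e^{λR₀} e^{-T} = e^{-λR_∞}`, the inverse of `e^{λR_∞}`.
-/

open Finset
open Polynomial (aeval)
open LieAlgebra (ad)

section TruncatedEvaluation

variable {K V : Type*} [CommRing K] [AddCommGroup V] [Module K V]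

theorem aeval_trunc_coe_apply {D : Module.End K V} {v : V} {n : ℕ} (hv : (D ^ n) v = 0)
    (p : Polynomial K) : aeval D (PowerSeries.trunc n (p : PowerSeries K)) v = aeval D p v := by
  obtain ⟨q, hq⟩ : Polynomial.X ^ n ∣ p - PowerSeries.trunc n (p : PowerSeries K) :=
    Polynomial.X_pow_dvd_iff.mpr fun i hi => by simp [PowerSeries.coeff_trunc, hi]
  rw [eq_comm, ← sub_eq_zero, ← LinearMap.sub_apply, ← map_sub, hq, mul_comm, map_mul, map_pow,
    Polynomial.aeval_X, Module.End.mul_apply, hv, map_zero]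

theorem aeval_trunc_mul_apply {D : Module.End K V} {v : V} {n : ℕ} (hv : (D ^ n) v = 0)
    (φ ψ : PowerSeries K) :
    aeval D (PowerSeries.trunc n (φ * ψ)) v =
      aeval D (PowerSeries.trunc n φ) (aeval D (PowerSeries.trunc n ψ) v) := by
  rw [← PowerSeries.trunc_trunc_mul_trunc, ← Polynomial.coe_mul, aeval_trunc_coe_apply hv,
    map_mul, Module.End.mul_apply]

theorem aeval_trunc_apply (D : Module.End K V) (n : ℕ) (φ : PowerSeries K) (v : V) :
    aeval D (PowerSeries.trunc n φ) v = ∑ i ∈ range n, PowerSeries.coeff i φ • (D ^ i) v := by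
  simp [Polynomial.aeval_def, PowerSeries.eval₂_trunc_eq_sum_range, LinearMap.sum_apply]

theorem pow_apply_aeval_eq_zero {D : Module.End K V} {v : V} {n : ℕ} (hv : (D ^ n) v = 0)
    (p : Polynomial K) : (D ^ n) (aeval D p v) = 0 := by
  have h := (Polynomial.commute_X_pow p n).map (aeval D)
  rw [map_pow, Polynomial.aeval_X] at h
  rw [← Module.End.mul_apply, h.eq, Module.End.mul_apply, hv, map_zero]

end TruncatedEvaluation

theorem PowerSeries.exp_mul_bernoulliPowerSeries :
    exp ℚ * bernoulliPowerSeries ℚ = rescale (-1) (bernoulliPowerSeries ℚ) := by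
  set e := exp ℚ
  set B := bernoulliPowerSeries ℚ
  have hB : B * (e - 1) = X := bernoulliPowerSeries_mul_exp_sub_one ℚ
  have hB' : rescale (-1) B * (rescale (-1) e - 1) = -X := by
    simpa using congrArg (rescale (-1 : ℚ)) hB
  have he : e * rescale (-1) e = 1 := exp_mul_exp_neg_eq_one
  have he₁ : e - 1 ≠ 0 := fun h => by simpa [e] using congrArg (coeff 1) h
  refine mul_right_cancel₀ he₁ ?_
  linear_combination e * hB + e * hB' - rescale (-1) B * he

section AssociativeLie

attribute [local instance] LieRing.ofAssociativeRing

namespace IsNilpotent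

theorem exp_apply_eq_aeval_trunc {V : Type*} [AddCommGroup V] [Module ℚ V]
    {D : Module.End ℚ V} (hD : IsNilpotent D) {v : V} {n : ℕ} (hv : (D ^ n) v = 0) :
    exp D v = aeval D (PowerSeries.trunc n (PowerSeries.exp ℚ)) v := by
  have h := exp_smul_eq_sum (M := V) hv hD
  simp only [Module.End.smul_def] at h
  rw [h, aeval_trunc_apply]
  simp [PowerSeries.coeff_exp]

variable {S : Type*} [Ring S] [Algebra ℚ S]

theorem exp_mulLeft {s : S} (hs : IsNilpotent s) :
    exp (LinearMap.mulLeft ℚ s) = LinearMap.mulLeft ℚ (exp s) :=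
  (hs.map_exp (Algebra.lmul ℚ S)).symm

theorem exp_mulRight {s : S} (hs : IsNilpotent s) :
    exp (LinearMap.mulRight ℚ s) = LinearMap.mulRight ℚ (exp s) := by
  obtain ⟨k, hk⟩ := hs
  have hk' : LinearMap.mulRight ℚ s ^ k = 0 := by
    rw [LinearMap.pow_mulRight, hk, LinearMap.mulRight_zero_eq_zero]
  ext x
  simp [exp_eq_sum hk, exp_eq_sum hk', LinearMap.sum_apply, LinearMap.pow_mulRight, mul_sum]

theorem exp_mul_mul_exp_neg {t : S} (ht : IsNilpotent t) (x : S) :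
    exp t * x * exp (-t) = exp (ad ℚ S t) x := by
  have hL : IsNilpotent (LinearMap.mulLeft ℚ t) := ht.map (Algebra.lmul ℚ S)
  have hR : IsNilpotent (LinearMap.mulRight ℚ (-t)) := by
    obtain ⟨k, hk⟩ := ht.neg
    exact ⟨k, by rw [LinearMap.pow_mulRight, hk, LinearMap.mulRight_zero_eq_zero]⟩
  have had : ad ℚ S t = LinearMap.mulLeft ℚ t + LinearMap.mulRight ℚ (-t) := by
    ext y
    simp [LieRing.of_associative_ring_bracket, sub_eq_add_neg]
  rw [had, exp_add_of_commute (LinearMap.commute_mulLeft_right t (-t)) hL hR, exp_mulLeft ht,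
    exp_mulRight ht.neg]
  simp [mul_assoc]

theorem exp_mul_exp_mul_exp_neg {t x : S} (ht : IsNilpotent t) (hx : IsNilpotent x) :
    exp t * exp x * exp (-t) = exp (exp t * x * exp (-t)) := by
  let u : Sˣ := ⟨exp t, exp (-t), exp_mul_exp_neg_self ht, exp_neg_mul_exp_self ht⟩
  simpa [ConjAct.units_smul_def, u] using (exp_smul (ConjAct.toConjAct u) hx).symm

theorem exp_mul_aeval_bernoulli_mul_exp_neg {t a : S} (ht : IsNilpotent t) {n : ℕ}
    (ha : (ad ℚ S t ^ n) a = 0) :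
    exp t * aeval (ad ℚ S t) (PowerSeries.trunc n (bernoulliPowerSeries ℚ)) a * exp (-t) =
      aeval (ad ℚ S t)
        (PowerSeries.trunc n (PowerSeries.rescale (-1) (bernoulliPowerSeries ℚ))) a := by
  rw [ht.exp_mul_mul_exp_neg, (LieAlgebra.ad_nilpotent_of_nilpotent ht).exp_apply_eq_aeval_trunc
    (pow_apply_aeval_eq_zero ha _), ← aeval_trunc_mul_apply ha,
    PowerSeries.exp_mul_bernoulliPowerSeries]

end IsNilpotent

section WordFiltration

variable (K : Type*) {S : Type*} [CommRing K] [Ring S] [Algebra K S] (s : Set S)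

def wordFiltration (k : ℕ) : Submodule K S :=
  Submodule.span K {x | ∃ l : List S, (∀ y ∈ l, y ∈ s) ∧ k ≤ l.length ∧ l.prod = x}

variable {K s}

theorem mem_wordFiltration_one {x : S} (hx : x ∈ s) : x ∈ wordFiltration K s 1 :=
  Submodule.subset_span ⟨[x], by simpa using hx, by simp, by simp⟩

theorem wordFiltration_antitone : Antitone (wordFiltration K s) :=
  fun _ _ hkl => Submodule.span_mono fun _ ⟨l, hl, hk, hx⟩ => ⟨l, hl, hkl.trans hk, hx⟩

theorem wordFiltration_mul_le (k l : ℕ) :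
    wordFiltration K s k * wordFiltration K s l ≤ wordFiltration K s (k + l) := by
  rw [wordFiltration, wordFiltration, Submodule.span_mul_span, Submodule.span_le]
  rintro _ ⟨_, ⟨l₁, hl₁, hk, rfl⟩, _, ⟨l₂, hl₂, hl, rfl⟩, rfl⟩
  refine Submodule.subset_span ⟨l₁ ++ l₂, ?_, by simp; omega, List.prod_append⟩
  simpa [or_imp, forall_and] using And.intro hl₁ hl₂

theorem wordFiltration_eq_bot {N : ℕ}
    (h : ∀ l : List S, (∀ x ∈ l, x ∈ s) → N ≤ l.length → l.prod = 0) :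
    wordFiltration K s N = ⊥ :=
  Submodule.span_eq_bot.mpr fun _ ⟨l, hl, hN, hx⟩ => hx ▸ h l hl hN

theorem pow_mem_wordFiltration {x : S} (hx : x ∈ wordFiltration K s 1) (k : ℕ) :
    x ^ k ∈ wordFiltration K s k := by
  induction k with
  | zero => exact Submodule.subset_span ⟨[], by simp, by simp, by simp⟩
  | succ k ih => exact wordFiltration_mul_le k 1 (pow_succ x k ▸ Submodule.mul_mem_mul ih hx)

theorem pow_eq_zero_of_mem_wordFiltration_one {N : ℕ} (hN : wordFiltration K s N = ⊥) {x : S}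
    (hx : x ∈ wordFiltration K s 1) : x ^ N = 0 := by
  simpa [hN] using pow_mem_wordFiltration hx N

theorem ad_pow_apply_mem_wordFiltration {t x : S} (ht : t ∈ wordFiltration K s 1) {k : ℕ}
    (hx : x ∈ wordFiltration K s k) (n : ℕ) : (ad K S t ^ n) x ∈ wordFiltration K s (k + n) := by
  induction n with
  | zero => simpa using hx
  | succ n ih =>
    rw [pow_succ', Module.End.mul_apply, LieAlgebra.ad_apply, LieRing.of_associative_ring_bracket]
    refine sub_mem ?_ (wordFiltration_mul_le _ 1 (Submodule.mul_mem_mul ih ht))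
    exact (by omega : 1 + (k + n) = k + (n + 1)) ▸
      wordFiltration_mul_le 1 _ (Submodule.mul_mem_mul ht ih)

theorem ad_pow_apply_eq_zero_of_wordFiltration_eq_bot {N : ℕ} (hN : wordFiltration K s N = ⊥)
    {t a : S} (ht : t ∈ wordFiltration K s 1) (ha : a ∈ wordFiltration K s 1) {n : ℕ}
    (hn : N ≤ n + 1) : (ad K S t ^ n) a = 0 := by
  have h :=
    wordFiltration_antitone (show N ≤ 1 + n by omega) (ad_pow_apply_mem_wordFiltration ht ha n)
  rwa [hN, Submodule.mem_bot] at h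

theorem aeval_ad_apply_mem_wordFiltration_one {t a : S} (ht : t ∈ wordFiltration K s 1)
    (ha : a ∈ wordFiltration K s 1) (p : Polynomial K) :
    aeval (ad K S t) p a ∈ wordFiltration K s 1 := by
  rw [Polynomial.aeval_eq_sum_range, LinearMap.sum_apply]
  exact sum_mem fun i _ => Submodule.smul_mem _ _
    (wordFiltration_antitone (by omega) (ad_pow_apply_mem_wordFiltration ht ha i))

end WordFiltration

end AssociativeLie

theorem sum_range_inv_factorial_smul_pow_eq_exp (𝕜 : Type*) [DivisionRing 𝕜] [CharZero 𝕜]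
    {S : Type*} [Ring S] [Module 𝕜 S] [Module ℚ S] {x : S} {n : ℕ} (hx : x ^ n = 0) :
    ∑ k ∈ range n, (k.factorial : 𝕜)⁻¹ • x ^ k = IsNilpotent.exp x := by
  rw [IsNilpotent.exp_eq_sum hx]
  refine sum_congr rfl fun k _ => ?_
  rw [← Rat.cast_smul_eq_qsmul 𝕜]
  push_cast
  rfl

theorem sum_range_ratCast_smul_iterate_eq_aeval_trunc (𝕜 : Type*) [DivisionRing 𝕜] [CharZero 𝕜]
    {V : Type*} [AddCommGroup V] [Module 𝕜 V] [Module ℚ V] (D : Module.End ℚ V) (n : ℕ)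
    (φ : PowerSeries ℚ) (v : V) :
    ∑ i ∈ range n, ((PowerSeries.coeff i φ : ℚ) : 𝕜) • D^[i] v =
      aeval D (PowerSeries.trunc n φ) v := by
  simp only [aeval_trunc_apply, Module.End.pow_apply, Rat.cast_smul_eq_qsmul]

/-- The completed algebra `ℂ⟨⟨T,A⟩⟩` is modelled by a `ℂ`-algebra in which every product of at
least `N` factors drawn from `{T, A}` vanishes, so that all exponential and Bernoulli series
become the finite sums written below (`ad_T/(e^{±x}-1)` has coefficients `±(∓1)^n B_n/n!`). -/
theorem conj_R0_eq_neg_Rinf {R : Type*} [Ring R] [Algebra ℂ R] (T A : R) (N : ℕ)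
    (h : ∀ l : List R, (∀ x ∈ l, x = T ∨ x = A) → N ≤ l.length → l.prod = 0) :
    let ad : R → R := fun x => T * x - x * T
    let E : R → R := fun x => ∑ k ∈ Finset.range (N + 1), ((k.factorial : ℂ))⁻¹ • x ^ k
    let R₀ : R := ∑ n ∈ Finset.range (N + 1),
      (((bernoulli n : ℚ) : ℂ) / (n.factorial : ℂ)) • ad^[n] A
    let Rinf : R := ∑ n ∈ Finset.range (N + 1),
      ((-((-1 : ℂ) ^ n * ((bernoulli n : ℚ) : ℂ))) / (n.factorial : ℂ)) • ad^[n] A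
    E T * R₀ * E (-T) = -Rinf ∧
      ∀ lam : ℂ, E T * E (lam • R₀) * E (-T) * E (lam • Rinf) = 1 := by
  intro ad E R₀ Rinf
  let _ : LieRing R := LieRing.ofAssociativeRing
  let _ : Algebra ℚ R := Algebra.compHom R (algebraMap ℚ ℂ)
  set F := wordFiltration ℚ ({T, A} : Set R)
  have hF : F N = ⊥ := wordFiltration_eq_bot fun l hl => h l (by simpa using hl)
  have hT : T ∈ F 1 := mem_wordFiltration_one (by simp)
  have hA : A ∈ F 1 := mem_wordFiltration_one (by simp)
  have hnil : ∀ x ∈ F 1, ∀ c : ℂ, (c • x) ^ N = 0 := fun x hx c => by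
    rw [smul_pow, pow_eq_zero_of_mem_wordFiltration_one hF hx, smul_zero]
  have hTN : T ^ N = 0 := by simpa using hnil T hT 1
  have hTN' : (-T) ^ N = 0 := by simpa using hnil T hT (-1)
  have hE : ∀ x : R, x ^ N = 0 → E x = IsNilpotent.exp x := fun x hx =>
    sum_range_inv_factorial_smul_pow_eq_exp ℂ (pow_eq_zero_of_le N.le_succ hx)
  have had : ad = LieAlgebra.ad ℚ R T := rfl
  have hR₀ : R₀ = aeval (LieAlgebra.ad ℚ R T)
      (PowerSeries.trunc (N + 1) (bernoulliPowerSeries ℚ)) A := by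
    rw [← sum_range_ratCast_smul_iterate_eq_aeval_trunc ℂ]
    exact sum_congr rfl fun n _ => by simp [bernoulliPowerSeries, had]
  have hRinf : -Rinf = aeval (LieAlgebra.ad ℚ R T)
      (PowerSeries.trunc (N + 1) (PowerSeries.rescale (-1) (bernoulliPowerSeries ℚ))) A := by
    rw [← sum_range_ratCast_smul_iterate_eq_aeval_trunc ℂ, ← sum_neg_distrib]
    exact sum_congr rfl fun n _ => by simp [bernoulliPowerSeries, neg_div, mul_div_assoc, had]
  have hconj : IsNilpotent.exp T * R₀ * IsNilpotent.exp (-T) = -Rinf := by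
    rw [hR₀, hRinf]
    exact IsNilpotent.exp_mul_aeval_bernoulli_mul_exp_neg ⟨N, hTN⟩
      (ad_pow_apply_eq_zero_of_wordFiltration_eq_bot hF hT hA (n := N + 1) (by omega))
  have hR₀F : R₀ ∈ F 1 := hR₀ ▸ aeval_ad_apply_mem_wordFiltration_one hT hA _
  have hRinfF : Rinf ∈ F 1 :=
    neg_mem_iff.mp (hRinf ▸ aeval_ad_apply_mem_wordFiltration_one hT hA _)
  refine ⟨by rwa [hE T hTN, hE (-T) hTN'], fun lam => ?_⟩
  rw [hE _ hTN, hE _ (hnil _ hR₀F lam), hE _ hTN', hE _ (hnil _ hRinfF lam),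
    IsNilpotent.exp_mul_exp_mul_exp_neg ⟨N, hTN⟩ ⟨N, hnil _ hR₀F lam⟩, mul_smul_comm,
    smul_mul_assoc, hconj, smul_neg, IsNilpotent.exp_neg_mul_exp_self ⟨N, hnil _ hRinfF lam⟩]
end

section
/- Let R = ℂ⟨⟨X₁,…,X_n⟩⟩ be the completed free associative algebra with coproduct Δ making each X_i primitive, and let A : [a,b] → R be a smooth function taking values in primitive elements. If X : [a,b] → R satisfies X' = A·X and X(a) = 1, then X(t) is group-like (ΔX(t) = X(t)⊗X(t) and ε(X(t)) = 1) for all t ∈ [a,b]. -/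
/-!
Both `Δ ∘ X` and `t ↦ ι₁ (X t) * ι₂ (X t)` solve the linear equation `Y' = (ι₁ A + ι₂ A) Y`
with `Y a = 1`: the first because `Δ` is an algebra map and `A` is primitive, the second by
the Leibniz rule, since `ι₁` and `ι₂` commute. Uniqueness for linear equations (Grönwall) makes
them equal. Likewise `ε ∘ X` and the constant `1` both solve `y' = ε(A) y = 0`.
-/

open Set

theorem HasDerivWithinAt.algHom_comp {R B : Type*} [NormedRing R] [NormedAlgebra ℝ R]
    [NormedRing B] [NormedAlgebra ℝ B] (φ : R →ₐ[ℝ] B) (hφ : Continuous φ)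
    {X : ℝ → R} {c : R} {s : Set ℝ} {t : ℝ} (hX : HasDerivWithinAt X (c * X t) s t) :
    HasDerivWithinAt (fun u => φ (X u)) (φ c * φ (X t)) s t :=
  ((⟨φ.toLinearMap, hφ⟩ : R →L[ℝ] B).hasFDerivAt.comp_hasDerivWithinAt t hX).congr_deriv
    (map_mul φ c (X t))

theorem HasDerivWithinAt.mul_of_commute {B : Type*} [NormedRing B] [NormedAlgebra ℝ B]
    {P Q : ℝ → B} {c d : B} {s : Set ℝ} {t : ℝ}
    (hP : HasDerivWithinAt P (c * P t) s t) (hQ : HasDerivWithinAt Q (d * Q t) s t)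
    (hPd : Commute (P t) d) :
    HasDerivWithinAt (fun u => P u * Q u) ((c + d) * (P t * Q t)) s t := by
  refine (hP.mul hQ).congr_deriv ?_
  rw [← mul_assoc, hPd.eq]
  noncomm_ring

theorem eqOn_Icc_of_hasDerivWithinAt_mul_left {B : Type*} [NormedRing B] [NormedAlgebra ℝ B]
    {C f g : ℝ → B} {a b : ℝ} (hC : ContinuousOn C (Icc a b))
    (hf : ∀ t ∈ Icc a b, HasDerivWithinAt f (C t * f t) (Icc a b) t)
    (hg : ∀ t ∈ Icc a b, HasDerivWithinAt g (C t * g t) (Icc a b) t)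
    (ha : f a = g a) : EqOn f g (Icc a b) := by
  obtain ⟨K, hK⟩ := (isCompact_Icc.image_of_continuousOn hC.nnnorm).bddAbove
  have hLip : ∀ t ∈ Ico a b, LipschitzOnWith K (C t * ·) univ := fun t ht =>
    ((lipschitzWith_smul (C t)).weaken
      (hK (mem_image_of_mem _ (Ico_subset_Icc_self ht)))).lipschitzOnWith
  have hright : ∀ h : ℝ → B, (∀ t ∈ Icc a b, HasDerivWithinAt h (C t * h t) (Icc a b) t) →
      ∀ t ∈ Ico a b, HasDerivWithinAt h (C t * h t) (Ici t) t := fun h hh t ht =>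
    (hh t (Ico_subset_Icc_self ht)).mono_of_mem_nhdsWithin (Icc_mem_nhdsGE_of_mem ht)
  exact ODE_solution_unique_of_mem_Icc_right hLip (fun t ht => (hf t ht).continuousWithinAt)
    (hright f hf) (fun _ _ => mem_univ _) (fun t ht => (hg t ht).continuousWithinAt)
    (hright g hg) (fun _ _ => mem_univ _) ha

/-- `B` plays the role of `R ⊗̂ R`, with `ι₁ r = r ⊗ 1` and `ι₂ r = 1 ⊗ r`, so that
`X t ⊗ X t = ι₁ (X t) * ι₂ (X t)`. -/
theorem solution_is_grouplike_general {R B : Type*}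
    [NormedRing R] [NormedAlgebra ℝ R]
    [NormedRing B] [NormedAlgebra ℝ B]
    (Δ ι₁ ι₂ : R →ₐ[ℝ] B) (ε : R →ₐ[ℝ] ℝ)
    (hΔc : Continuous Δ) (hι₁c : Continuous ι₁) (hι₂c : Continuous ι₂) (hεc : Continuous ε)
    (hcomm : ∀ u v : R, ι₁ u * ι₂ v = ι₂ v * ι₁ u)
    (a b : ℝ) (A X : ℝ → R)
    (hA : ContinuousOn A (Set.Icc a b))
    (hprim : ∀ t ∈ Set.Icc a b, Δ (A t) = ι₁ (A t) + ι₂ (A t))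
    (hεA : ∀ t ∈ Set.Icc a b, ε (A t) = 0)
    (hX : ∀ t ∈ Set.Icc a b, HasDerivWithinAt X (A t * X t) (Set.Icc a b) t)
    (hXa : X a = 1) :
    ∀ t ∈ Set.Icc a b, ε (X t) = 1 ∧ Δ (X t) = ι₁ (X t) * ι₂ (X t) := by
  have hεX : EqOn (fun t => ε (X t)) (fun _ => 1) (Icc a b) := by
    refine eqOn_Icc_of_hasDerivWithinAt_mul_left (C := fun t => ε (A t))
      (hεc.comp_continuousOn hA) (fun t ht => (hX t ht).algHom_comp ε hεc)
      (fun t ht => ?_) (by simp [hXa])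
    simpa [hεA t ht] using hasDerivWithinAt_const t (Icc a b) (1 : ℝ)
  have hΔX : EqOn (fun t => Δ (X t)) (fun t => ι₁ (X t) * ι₂ (X t)) (Icc a b) := by
    refine eqOn_Icc_of_hasDerivWithinAt_mul_left (C := fun t => ι₁ (A t) + ι₂ (A t))
      ((hι₁c.comp_continuousOn hA).add (hι₂c.comp_continuousOn hA)) (fun t ht => ?_)
      (fun t ht => ((hX t ht).algHom_comp ι₁ hι₁c).mul_of_commute
        ((hX t ht).algHom_comp ι₂ hι₂c) (hcomm _ _))
      (by simp [hXa])
    simpa only [hprim t ht] using (hX t ht).algHom_comp Δ hΔc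
  exact fun t ht => ⟨hεX ht, hΔX ht⟩

/-- Solutions of `X' = A·X`, `X(a) = 1` with primitive coefficient `A` are group-like.
We model the complete Hopf algebra `ℂ⟨⟨X₁,…,Xₙ⟩⟩` by a (Banach) topological algebra `R` with a
coproduct `Δ : R → B` into a topological algebra `B` (playing the role of `R ⊗̂ R`) equipped
with the two commuting embeddings `ι₁, ι₂` (playing `r ↦ r⊗1` and `r ↦ 1⊗r`) and the
augmentation `ε`.  If `A : [a,b] → R` is continuous with `Δ(A t) = ι₁(A t) + ι₂(A t)` and
`ε(A t) = 0` (i.e. `A t` is primitive), and `X` solves `X' = A·X`, `X(a) = 1`, then for every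
`t ∈ [a,b]`, `X t` is group-like: `ε(X t) = 1` and `Δ(X t) = X t ⊗ X t`
(i.e. `Δ(X t) = ι₁(X t)·ι₂(X t)`). -/
theorem solution_is_grouplike {R B : Type*}
    [NormedRing R] [NormedAlgebra ℝ R] [CompleteSpace R]
    [NormedRing B] [NormedAlgebra ℝ B] [CompleteSpace B]
    (Δ ι₁ ι₂ : R →ₐ[ℝ] B) (ε : R →ₐ[ℝ] ℝ)
    (hΔc : Continuous Δ) (hι₁c : Continuous ι₁) (hι₂c : Continuous ι₂) (hεc : Continuous ε)
    (hcomm : ∀ u v : R, ι₁ u * ι₂ v = ι₂ v * ι₁ u)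
    (a b : ℝ) (A X : ℝ → R)
    (hA : ContinuousOn A (Set.Icc a b))
    (hprim : ∀ t ∈ Set.Icc a b, Δ (A t) = ι₁ (A t) + ι₂ (A t))
    (hεA : ∀ t ∈ Set.Icc a b, ε (A t) = 0)
    (hX : ∀ t ∈ Set.Icc a b, HasDerivWithinAt X (A t * X t) (Set.Icc a b) t)
    (hXa : X a = 1) :
    ∀ t ∈ Set.Icc a b, ε (X t) = 1 ∧ Δ (X t) = ι₁ (X t) * ι₂ (X t) :=
  solution_is_grouplike_general Δ ι₁ ι₂ ε hΔc hι₁c hι₂c hεc hcomm a b A X hA hprim hεA hX hXa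
end
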